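/- A λ-term M is locally periodic if and only if M is globally periodic. -/

import Mathlib

/-- Untyped λ-terms in de Bruijn notation (the variables are `ℕ`). -/
inductive Lam : Type
  | var : ℕ → Lam
  | app : Lam → Lam → Lam
  | abs : Lam → Lam
  deriving DecidableEq

namespace Lam

/-- Shift the free de Bruijn indices `≥ d` up by one. -/
def lift (d : ℕ) : Lam → Lam
  | var n => if n < d then var n else var (n + 1)
  | app s t => app (lift d s) (lift d t)
  | abs t => abs (lift (d + 1) t)

/-- Capture-avoiding substitution `t[k := u]`. -/
def subst : Lam → ℕ → Lam → Lam
  | var n, k, u => if n < k then var n else if n = k then u else var (n - 1)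
  | app s t, k, u => app (subst s k u) (subst t k u)
  | abs t, k, u => abs (subst t (k + 1) (lift 0 u))

/-- One-step β-reduction `→β`: the compatible closure of the β-rule. -/
inductive Beta : Lam → Lam → Prop
  | beta (t u : Lam) : Beta (Lam.app (Lam.abs t) u) (subst t 0 u)
  | appL {s s' : Lam} (t : Lam) : Beta s s' → Beta (Lam.app s t) (Lam.app s' t)
  | appR (s : Lam) {t t' : Lam} : Beta t t' → Beta (Lam.app s t) (Lam.app s t')
  | abs {t t' : Lam} : Beta t t' → Beta (Lam.abs t) (Lam.abs t')

/-- `↠β`: the reflexive–transitive closure of `→β`. -/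
def BetaStar : Lam → Lam → Prop := Relation.ReflTransGen Beta

/-- `→β^k`: the `k`-fold composition of `→β`. -/
def BetaN : ℕ → Lam → Lam → Prop
  | 0, s, t => s = t
  | k + 1, s, t => ∃ u, Beta s u ∧ BetaN k u t

/-- `=β`, β-convertibility: the equivalence closure of `→β`. -/
inductive Conv : Lam → Lam → Prop
  | rel {s t : Lam} : Beta s t → Conv s t
  | refl (s : Lam) : Conv s s
  | symm {s t : Lam} : Conv s t → Conv t s
  | trans {s t u : Lam} : Conv s t → Conv t u → Conv s u

/-- The free variables of a term (as de Bruijn indices). -/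
def FV : Lam → Finset ℕ
  | var n => {n}
  | app s t => FV s ∪ FV t
  | abs t => ((FV t).erase 0).image (· - 1)

/-- `Y` is a fixed point combinator (fpc): `Y x =β x (Y x)` for a variable `x` not free in `Y`. -/
def IsFPC (Y : Lam) : Prop :=
  ∀ x : ℕ, x ∉ FV Y → Conv (app Y (var x)) (app (var x) (app Y (var x)))

/-- `I = λx.x` -/
def combI : Lam := abs (var 0)

/-- `S = λxyz.xz(yz)` -/
def combS : Lam := abs (abs (abs (app (app (var 2) (var 0)) (app (var 1) (var 0)))))

/-- `B = λxyz.x(yz)` -/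
def combB : Lam := abs (abs (abs (app (var 2) (app (var 1) (var 0)))))

/-- `δ = λab.b(ab)` -/
def delta : Lam := abs (abs (app (var 0) (app (var 1) (var 0))))

/-- `η = λxf.f(xxf)` -/
def etaC : Lam := abs (abs (app (var 0) (app (app (var 1) (var 1)) (var 0))))

/-- Curry's fpc `Y₀ = λf.(λx.f(xx))(λx.f(xx))` -/
def curryY : Lam :=
  abs (app (abs (app (var 1) (app (var 0) (var 0))))
    (abs (app (var 1) (app (var 0) (var 0)))))

/-- `A B ⋯ B`: `A` applied to `n` copies of `B`, associating to the left. -/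
def appN (A B : Lam) : ℕ → Lam
  | 0 => A
  | n + 1 => app (appN A B n) B

/-- `M N₁ ⋯ Nₘ`: `M` applied to the terms in `L`, associating to the left. -/
def appList (M : Lam) (L : List Lam) : Lam := L.foldl app M

/-- `M` is an abstraction. -/
def IsAbs : Lam → Prop
  | abs _ => True
  | _ => False

/-- A head reduction step:
    `λx₁…xₙ.(λy.M)N N₁…Nₘ →h λx₁…xₙ.M[y:=N] N₁…Nₘ`. -/
inductive HeadStep : Lam → Lam → Prop
  | beta (t u : Lam) : HeadStep (Lam.app (Lam.abs t) u) (subst t 0 u)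
  | app {s s' : Lam} (t : Lam) : ¬ IsAbs s → HeadStep s s' → HeadStep (Lam.app s t) (Lam.app s' t)
  | abs {t t' : Lam} : HeadStep t t' → HeadStep (Lam.abs t) (Lam.abs t')

/-- `→h^k`: `k`-fold head reduction. -/
def HeadSteps : ℕ → Lam → Lam → Prop
  | 0, s, t => s = t
  | k + 1, s, t => ∃ u, HeadStep s u ∧ HeadSteps k u t

/-- `λ^n.t`: `n` abstractions in front of `t`. -/
def absN : ℕ → Lam → Lam
  | 0, t => t
  | n + 1, t => abs (absN n t)

/-- The head normal form `λx₁…xₙ. y A₁ ⋯ Aₘ` (de Bruijn head variable `y`). -/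
def mkHnf (n y : ℕ) (args : List Lam) : Lam := absN n (appList (var y) args)

/-- Head normal forms. -/
def IsHnf (M : Lam) : Prop := ∃ n y args, M = mkHnf n y args

/-- `M` has a head normal form (its head reduction reaches an hnf). -/
def HasHnf (M : Lam) : Prop := ∃ k H, HeadSteps k M H ∧ IsHnf H

/-- Nodes of a (clocked) Böhm Tree, seen as an infinite λ⊥-term. -/
inductive BTN : Type
  | lam : BTN
  | app : BTN
  | var : ℕ → BTN
  | bot : BTN
  deriving DecidableEq

/-- `CBT M p o a`: in the clocked Böhm Tree of `M`, the position `p`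
    (a sequence over `{0,1,2}`: `0` descends under an abstraction, `1` and `2` to the
    left and right parts of an application) carries the node `o` with annotation `a`
    (`a = some k` exactly at the roots of the coinductive blocks, where `k` is the number
    of head reduction steps needed to reach the hnf producing that block). -/
inductive CBT : Lam → List ℕ → BTN → Option ℕ → Prop
  | bot {M : Lam} : ¬ HasHnf M → CBT M [] BTN.bot none
  | lam {M : Lam} {k n y : ℕ} {args : List Lam} {i : ℕ} :
      HeadSteps k M (mkHnf n y args) → i < n →
      CBT M (List.replicate i 0) BTN.lam (if i = 0 then some k else none)
  | app {M : Lam} {k n y : ℕ} {args : List Lam} {j : ℕ} :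
      HeadSteps k M (mkHnf n y args) → j < args.length →
      CBT M (List.replicate n 0 ++ List.replicate j 1) BTN.app
        (if n = 0 ∧ j = 0 then some k else none)
  | var {M : Lam} {k n y : ℕ} {args : List Lam} :
      HeadSteps k M (mkHnf n y args) →
      CBT M (List.replicate n 0 ++ List.replicate args.length 1) (BTN.var y)
        (if n = 0 ∧ args.length = 0 then some k else none)
  | child {M : Lam} {k n y : ℕ} {args : List Lam} {i : ℕ} {q : List ℕ} {o : BTN} {a : Option ℕ} :
      HeadSteps k M (mkHnf n y args) → (h : i < args.length) →
      CBT (args.get ⟨i, h⟩) q o a →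
      CBT M (List.replicate n 0 ++ List.replicate (args.length - 1 - i) 1 ++ 2 :: q) o a

/-- The underlying (annotation-free) Böhm Tree: node `o` at position `p`. -/
def BTNode (M : Lam) (p : List ℕ) (o : BTN) : Prop := ∃ a, CBT M p o a

/-- `cBT M` and `cBT N` have the same underlying (annotation-free) Böhm Tree. -/
def SameBT (M N : Lam) : Prop := ∀ (p : List ℕ) (o : BTN), BTNode M p o ↔ BTNode N p o

/-- At every position of length `≥ l` where both clocked Böhm Trees are annotated,
    the annotation of `cBT M` is `≤` the annotation of `cBT N`. -/
def AnnLeFrom (l : ℕ) (M N : Lam) : Prop :=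
  ∀ (p : List ℕ) (o₁ o₂ : BTN) (k₁ k₂ : ℕ), l ≤ p.length →
    CBT M p o₁ (some k₁) → CBT N p o₂ (some k₂) → k₁ ≤ k₂

/-- At every position of length `≥ l` where both clocked Böhm Trees are annotated,
    the annotations of `cBT M` and `cBT N` are equal. -/
def AnnEqFrom (l : ℕ) (M N : Lam) : Prop :=
  ∀ (p : List ℕ) (o₁ o₂ : BTN) (k₁ k₂ : ℕ), l ≤ p.length →
    CBT M p o₁ (some k₁) → CBT N p o₂ (some k₂) → k₁ = k₂

/-- `cBT M ≤ cBT N`: same underlying Böhm Tree and pointwise `≤` on annotations;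
    i.e. `M` improves `N` globally. -/
def CBTle (M N : Lam) : Prop := SameBT M N ∧ AnnLeFrom 0 M N

/-- `M` improves `N` eventually. -/
def ImprovesEventually (M N : Lam) : Prop := SameBT M N ∧ ∃ l, AnnLeFrom l M N

/-- `M` matches `N` eventually. -/
def MatchesEventually (M N : Lam) : Prop := SameBT M N ∧ ∃ l, AnnEqFrom l M N

/-- `TermAt M σ R`: `R` is the λ-term at position `σ` in the Böhm Tree of `M`
    (i.e. the subtree of `BT(M)` at `σ` is `BT(R)`). -/
inductive TermAt : Lam → List ℕ → Lam → Prop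
  | refl (M : Lam) : TermAt M [] M
  | lam {M : Lam} {k n y : ℕ} {args : List Lam} {i : ℕ} :
      HeadSteps k M (mkHnf n y args) → i ≤ n →
      TermAt M (List.replicate i 0) (mkHnf (n - i) y args)
  | spine {M : Lam} {k n y : ℕ} {args : List Lam} {j : ℕ} :
      HeadSteps k M (mkHnf n y args) → j ≤ args.length →
      TermAt M (List.replicate n 0 ++ List.replicate j 1)
        (appList (Lam.var y) (args.take (args.length - j)))
  | child {M : Lam} {k n y : ℕ} {args : List Lam} {i : ℕ} {q : List ℕ} {R : Lam} :
      HeadSteps k M (mkHnf n y args) → (h : i < args.length) →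
      TermAt (args.get ⟨i, h⟩) q R →
      TermAt M (List.replicate n 0 ++ List.replicate (args.length - 1 - i) 1 ++ 2 :: q) R

/-- `M` is periodic at the nonempty position `σ` of `BT(M)`: `M =β M_σ`. -/
def PeriodicAt (M : Lam) (σ : List ℕ) : Prop :=
  σ ≠ [] ∧ (∃ o, BTNode M σ o) ∧ ∃ R, TermAt M σ R ∧ Conv M R

/-- `M` is locally periodic: every infinite path through `BT(M)` passes through a
    position at which `M` is periodic. -/
def LocallyPeriodic (M : Lam) : Prop :=
  ∀ π : ℕ → ℕ, (∀ n : ℕ, ∃ o, BTNode M (List.ofFn fun i : Fin n => π i) o) →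
    ∃ n : ℕ, PeriodicAt M (List.ofFn fun i : Fin n => π i)

/-- Nodes of a Böhm Tree context. -/
inductive CN : Type
  | lam : CN
  | app : CN
  | bot : CN
  | var : ℕ → CN
  | hole : ℕ → CN
  deriving DecidableEq

def BTN.toCN : BTN → CN
  | BTN.lam => CN.lam
  | BTN.app => CN.app
  | BTN.var n => CN.var n
  | BTN.bot => CN.bot

/-- Finite λ⊥-terms with holes `□ᵢ`. -/
inductive LamB : Type
  | var : ℕ → LamB
  | app : LamB → LamB → LamB
  | abs : LamB → LamB
  | bot : LamB
  | hole : ℕ → LamB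
  deriving DecidableEq

def LamB.head : LamB → CN
  | LamB.var n => CN.var n
  | LamB.app _ _ => CN.app
  | LamB.abs _ => CN.lam
  | LamB.bot => CN.bot
  | LamB.hole i => CN.hole i

/-- The node of a λ⊥-context at a position (sequences over `{0,1,2}`). -/
def LamB.nodeAt : LamB → List ℕ → Option CN
  | t, [] => some t.head
  | LamB.abs t, 0 :: p => LamB.nodeAt t p
  | LamB.app s _, 1 :: p => LamB.nodeAt s p
  | LamB.app _ t, 2 :: p => LamB.nodeAt t p
  | _, _ :: _ => none

/-- Redex-free λ⊥-contexts (= finite Böhm Trees whose leaves may also be holes). -/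
def LamB.RedexFree : LamB → Prop
  | LamB.var _ => True
  | LamB.bot => True
  | LamB.hole _ => True
  | LamB.abs t => LamB.RedexFree t
  | LamB.app (LamB.abs _) _ => False
  | LamB.app s t => LamB.RedexFree s ∧ LamB.RedexFree t

/-- `M` is globally periodic: there is a Böhm Tree context `C[]₁⋯[]ₙ` (not a bare hole)
    and terms `Mᵢ` such that `M = C[M₁]⋯[Mₙ]` — i.e. `BT(M)` agrees with `C` outside the
    holes and `Mᵢ` is the term of `M` at the position of hole `i` — with `M =β Mᵢ`. -/
def GloballyPeriodic (M : Lam) : Prop :=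
  ∃ (C : LamB) (Ms : ℕ → Lam),
    LamB.RedexFree C ∧ (∀ i, C ≠ LamB.hole i) ∧
    (∀ (p : List ℕ) (o : BTN), LamB.nodeAt C p = some (BTN.toCN o) → BTNode M p o) ∧
    (∀ (p : List ℕ) (o : BTN), BTNode M p o →
      LamB.nodeAt C p = some (BTN.toCN o) ∨
        ∃ q r i, p = q ++ r ∧ LamB.nodeAt C q = some (CN.hole i)) ∧
    (∀ (p : List ℕ) (i : ℕ), LamB.nodeAt C p = some (CN.hole i) →
      TermAt M p (Ms i) ∧ Conv M (Ms i))

end Lam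

/-!
Globally periodic implies locally periodic because a path through `BT(M)` longer than the
context `C` must leave `C` through a hole, i.e. through a periodic position.

Conversely, cut `BT(M)` at its periodic positions. What remains is finitely branching and, by
local periodicity, has no infinite path, so by Kőnig's lemma it has bounded depth: it is a finite
Böhm Tree context whose holes sit at periodic positions.
-/

theorem List.replicate_append_inj {α : Type*} {a : α} {i i' : ℕ} {l l' : List α}
    (hl : l.head? ≠ some a) (hl' : l'.head? ≠ some a)
    (h : List.replicate i a ++ l = List.replicate i' a ++ l') : i = i' ∧ l = l' := by
  induction i generalizing i' with
  | zero => cases i' with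
    | zero => exact ⟨rfl, h⟩
    | succ => subst h; simp [List.replicate_succ] at hl
  | succ i ih => cases i' with
    | zero => subst h; simp [List.replicate_succ] at hl'
    | succ i' =>
      obtain ⟨rfl, rfl⟩ := ih (by simpa [List.replicate_succ] using h)
      exact ⟨rfl, rfl⟩

theorem List.append_cons_eq_replicate_append {α : Type*} {a c : α} {i : ℕ} {p r l : List α}
    (h : p ++ c :: r = List.replicate i a ++ l) :
    (∃ i' < i, p = List.replicate i' a ∧ c = a) ∨
      ∃ l₁, p = List.replicate i a ++ l₁ ∧ l = l₁ ++ c :: r := by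
  rcases List.append_eq_append_iff.1 h with ⟨_ | ⟨x, s⟩, hrep, hl⟩ | ⟨l₁, hp, hl⟩
  · exact .inr ⟨[], by simpa using hrep.symm, by simpa using hl.symm⟩
  · obtain ⟨hlen, hp, hs⟩ := List.append_eq_replicate_iff.1 hrep.symm
    obtain ⟨rfl, -⟩ := List.cons_eq_cons.1 hl
    refine .inl ⟨p.length, by simp at hlen; omega, hp, ?_⟩
    simpa using (List.eq_replicate_iff.1 hs).2 _ (by simp)
  · exact .inr ⟨l₁, hp, hl⟩

theorem List.eq_ofFn_of_append_eq_ofFn {α : Type*} {π : ℕ → α} {n : ℕ} {q r : List α}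
    (h : q ++ r = List.ofFn fun i : Fin n => π i) : q = List.ofFn fun i : Fin q.length => π i := by
  have hlen : q.length ≤ n := by
    have := congrArg List.length h
    simp at this
    omega
  calc q = (q ++ r).take q.length := by simp
    _ = _ := by
      rw [h]
      apply List.ext_getElem <;> simp [hlen]

/-- Kőnig's lemma. -/
theorem exists_seq_forall_ofFn_mem_of_unbounded {α : Type*} {T : Set (List α)}
    (hpre : ∀ p q, p ++ q ∈ T → p ∈ T) (hfin : ∀ p, {c | p ++ [c] ∈ T}.Finite)
    (hunb : ∀ n, ∃ p ∈ T, n ≤ p.length) :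
    ∃ π : ℕ → α, ∀ n, (List.ofFn fun i : Fin n => π i) ∈ T := by
  let Unbounded (p : List α) : Prop := ∀ n, ∃ q, p ++ q ∈ T ∧ n ≤ q.length
  have step (p : List α) (hp : Unbounded p) : ∃ c, Unbounded (p ++ [c]) := by
    by_contra! hN
    simp only [Unbounded, not_forall, not_exists, not_and, not_le] at hN
    choose N hN using hN
    obtain ⟨_ | ⟨c, q⟩, hq, hlen⟩ := hp (∑ c ∈ (hfin p).toFinset, N c + 1)
    · simp at hlen
    have hc : c ∈ (hfin p).toFinset := by simpa using hpre (p ++ [c]) q (by simpa using hq)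
    have hNc := hN c q (by simpa using hq)
    have := Finset.single_le_sum (fun _ _ => Nat.zero_le _) hc (f := N)
    simp only [List.length_cons] at hlen
    omega
  have : Nonempty α := by
    obtain ⟨_ | ⟨a, _⟩, -, h⟩ := hunb 1
    · simp at h
    · exact ⟨a⟩
  choose! next hnext using step
  let seq (n : ℕ) : List α := Nat.rec [] (fun _ p => p ++ [next p]) n
  have hseq (n : ℕ) : Unbounded (seq n) := by
    induction n with
    | zero => intro n; simpa [seq] using hunb n
    | succ n ih => exact hnext _ ih
  have hofn (n : ℕ) : seq n = List.ofFn fun i : Fin n => next (seq i) := by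
    induction n with
    | zero => rfl
    | succ n ih => rw [List.ofFn_succ_last]; simp [seq, ← ih]
  refine ⟨fun i => next (seq i), fun n => ?_⟩
  obtain ⟨q, hq, -⟩ := hseq n 0
  exact hofn n ▸ hpre _ _ hq

namespace Lam

theorem appList_append_singleton (M : Lam) (l : List Lam) (a : Lam) :
    appList M (l ++ [a]) = app (appList M l) a := by
  simp [appList]

theorem not_isAbs_appList_var (y : ℕ) (l : List Lam) : ¬ IsAbs (appList (var y) l) := by
  induction l using List.reverseRecOn <;> simp [appList, IsAbs]

theorem appList_var_eq_app {y : ℕ} {l : List Lam} {A B : Lam} (h : appList (var y) l = app A B) :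
    ∃ l', l = l' ++ [B] ∧ A = appList (var y) l' := by
  induction l using List.reverseRecOn with
  | nil => simp [appList] at h
  | append_singleton l a =>
    rw [appList_append_singleton, app.injEq] at h
    exact ⟨l, by rw [h.2], h.1.symm⟩

theorem appList_var_inj {y y' : ℕ} {l l' : List Lam}
    (h : appList (var y) l = appList (var y') l') : y = y' ∧ l = l' := by
  induction l using List.reverseRecOn generalizing l' with
  | nil =>
    rcases l'.eq_nil_or_concat' with rfl | ⟨l', a, rfl⟩
    · simpa [appList] using h
    · simp [appList] at h
  | append_singleton l a ih =>
    obtain ⟨l'', rfl, hl⟩ := appList_var_eq_app (h.symm.trans (appList_append_singleton _ l a))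
    obtain ⟨rfl, rfl⟩ := ih hl
    exact ⟨rfl, rfl⟩

theorem absN_inj {n n' : ℕ} {T T' : Lam} (hT : ¬ IsAbs T) (hT' : ¬ IsAbs T')
    (h : absN n T = absN n' T') : n = n' ∧ T = T' := by
  induction n generalizing n' with
  | zero => cases n' with
    | zero => exact ⟨rfl, h⟩
    | succ => subst h; exact absurd trivial hT
  | succ n ih => cases n' with
    | zero => subst h; exact absurd trivial hT'
    | succ n' =>
      obtain ⟨rfl, rfl⟩ := ih (abs.inj h)
      exact ⟨rfl, rfl⟩

theorem mkHnf_inj {n y n' y' : ℕ} {args args' : List Lam}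
    (h : mkHnf n y args = mkHnf n' y' args') : n = n' ∧ y = y' ∧ args = args' := by
  obtain ⟨hn, h⟩ := absN_inj (not_isAbs_appList_var y args) (not_isAbs_appList_var y' args') h
  exact ⟨hn, appList_var_inj h⟩

theorem not_headStep_appList_var {y : ℕ} {l : List Lam} {t : Lam} :
    ¬ HeadStep (appList (var y) l) t := by
  generalize hS : appList (var y) l = S
  intro h
  induction h generalizing l with
  | beta =>
    obtain ⟨_, -, hA⟩ := appList_var_eq_app hS
    exact not_isAbs_appList_var _ _ (by rw [← hA]; trivial)
  | app _ _ _ ih =>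
    obtain ⟨_, -, hA⟩ := appList_var_eq_app hS
    exact ih hA.symm
  | abs => exact not_isAbs_appList_var _ _ (by rw [hS]; trivial)

theorem not_headStep_mkHnf {n y : ℕ} {args : List Lam} {t : Lam} :
    ¬ HeadStep (mkHnf n y args) t := by
  induction n generalizing t with
  | zero => exact not_headStep_appList_var
  | succ n ih =>
    rintro (_ | _ | ⟨h⟩)
    exact ih h

theorem HeadStep.deterministic {s t t' : Lam} (h : HeadStep s t) (h' : HeadStep s t') : t = t' := by
  induction h generalizing t' with
  | beta => cases h' with
    | beta => rfl
    | app _ hna => exact absurd trivial hna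
  | app _ hna _ ih => cases h' with
    | beta => exact absurd trivial hna
    | app _ _ hs' => rw [ih hs']
  | abs _ ih => cases h' with
    | abs hs' => rw [ih hs']

theorem HeadSteps.hnf_unique {k k' : ℕ} {M : Lam} {n y n' y' : ℕ} {args args' : List Lam}
    (h : HeadSteps k M (mkHnf n y args)) (h' : HeadSteps k' M (mkHnf n' y' args')) :
    k = k' ∧ n = n' ∧ y = y' ∧ args = args' := by
  induction k generalizing k' M with
  | zero => cases k' with
    | zero => exact ⟨rfl, mkHnf_inj (h.symm.trans h')⟩
    | succ k' =>
      obtain ⟨u, hu, -⟩ := h'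
      exact absurd (h ▸ hu) not_headStep_mkHnf
  | succ k ih => cases k' with
    | zero =>
      obtain ⟨u, hu, -⟩ := h
      exact absurd (h' ▸ hu) not_headStep_mkHnf
    | succ k' =>
      obtain ⟨u, hu, h⟩ := h
      obtain ⟨u', hu', h'⟩ := h'
      obtain ⟨rfl, hdata⟩ := ih h (hu.deterministic hu' ▸ h')
      exact ⟨rfl, hdata⟩

/-- Positions `0ⁱ 1ʲ t`, with `t` empty or entering an argument, address the spine of a head
normal form. -/
theorem spine_pos_inj {i j i' j' : ℕ} {t t' : List ℕ} (ht : t = [] ∨ ∃ q, t = 2 :: q)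
    (ht' : t' = [] ∨ ∃ q, t' = 2 :: q)
    (h : List.replicate i 0 ++ List.replicate j 1 ++ t =
      List.replicate i' 0 ++ List.replicate j' 1 ++ t') :
    i = i' ∧ j = j' ∧ t = t' := by
  have head_ne {t : List ℕ} (ht : t = [] ∨ ∃ q, t = 2 :: q) (c : ℕ) (hc : c < 2) :
      t.head? ≠ some c := by
    rcases ht with rfl | ⟨q, rfl⟩ <;> simp; omega
  have head_ne_zero {j : ℕ} {t : List ℕ} (ht : t = [] ∨ ∃ q, t = 2 :: q) :
      (List.replicate j 1 ++ t).head? ≠ some 0 := by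
    cases j <;> simp [List.replicate_succ, head_ne ht 0]
  simp only [List.append_assoc] at h
  obtain ⟨rfl, h₁⟩ := List.replicate_append_inj (head_ne_zero ht) (head_ne_zero ht') h
  obtain ⟨rfl, rfl⟩ :=
    List.replicate_append_inj (head_ne ht 1 one_lt_two) (head_ne ht' 1 one_lt_two) h₁
  exact ⟨rfl, rfl, rfl⟩

theorem append_cons_eq_spine_pos {p r t : List ℕ} {c i j : ℕ}
    (h : p ++ c :: r = List.replicate i 0 ++ List.replicate j 1 ++ t) :
    (∃ i' < i, p = List.replicate i' 0 ∧ c = 0) ∨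
      (∃ j' < j, p = List.replicate i 0 ++ List.replicate j' 1 ∧ c = 1) ∨
      ∃ t₁, p = List.replicate i 0 ++ List.replicate j 1 ++ t₁ ∧ t = t₁ ++ c :: r := by
  rw [List.append_assoc] at h
  rcases List.append_cons_eq_replicate_append h with h0 | ⟨l₁, rfl, hl⟩
  · exact .inl h0
  rcases List.append_cons_eq_replicate_append hl.symm with ⟨j', hj', rfl, rfl⟩ | ⟨t₁, rfl, rfl⟩
  · exact .inr (.inl ⟨j', hj', rfl, rfl⟩)
  · exact .inr (.inr ⟨t₁, by simp, rfl⟩)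

def BTN.HasChild : BTN → ℕ → Prop
  | .lam, c => c = 0
  | .app, c => c = 1 ∨ c = 2
  | _, _ => False

theorem BTNode.bot_or_spine_or_arg {M : Lam} {p : List ℕ} {o : BTN} (h : BTNode M p o) :
    (¬ HasHnf M ∧ p = [] ∧ o = .bot) ∨
    ∃ k n y args, HeadSteps k M (mkHnf n y args) ∧ ∃ i j t,
      p = List.replicate i 0 ++ List.replicate j 1 ++ t ∧
      ((t = [] ∧ ((i < n ∧ j = 0 ∧ o = .lam) ∨ (i = n ∧ j < args.length ∧ o = .app) ∨
          (i = n ∧ j = args.length ∧ o = .var y))) ∨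
        ∃ l, ∃ hl : l < args.length, ∃ q, t = 2 :: q ∧ i = n ∧ j = args.length - 1 - l ∧
          BTNode (args.get ⟨l, hl⟩) q o) := by
  obtain ⟨a, h⟩ := h
  cases h with
  | bot h => exact .inl ⟨h, rfl, rfl⟩
  | lam hk hi =>
    exact .inr ⟨_, _, _, _, hk, _, 0, [], by simp, .inl ⟨rfl, .inl ⟨hi, rfl, rfl⟩⟩⟩
  | app hk hj =>
    exact .inr ⟨_, _, _, _, hk, _, _, [], by simp, .inl ⟨rfl, .inr (.inl ⟨rfl, hj, rfl⟩)⟩⟩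
  | var hk =>
    exact .inr ⟨_, _, _, _, hk, _, _, [], by simp, .inl ⟨rfl, .inr (.inr ⟨rfl, rfl, rfl⟩)⟩⟩
  | child hk hl hq =>
    exact .inr ⟨_, _, _, _, hk, _, _, _, rfl, .inr ⟨_, hl, _, rfl, rfl, rfl, _, hq⟩⟩

theorem BTNode.unique {M : Lam} {p : List ℕ} {o o' : BTN} (h : BTNode M p o) (h' : BTNode M p o') :
    o = o' := by
  induction hlen : p.length using Nat.strong_induction_on generalizing M p o o' with | _ _ ih
  rcases h.bot_or_spine_or_arg with ⟨hM, rfl, rfl⟩ | ⟨k, n, y, args, hk, i, j, t, rfl, hleaf⟩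
  · rcases h'.bot_or_spine_or_arg with ⟨-, -, rfl⟩ | ⟨k, n, y, args, hk, -⟩
    · rfl
    · exact absurd ⟨k, _, hk, n, y, args, rfl⟩ hM
  rcases h'.bot_or_spine_or_arg with ⟨hM, -, -⟩ | ⟨k', n', y', args', hk', i', j', t', hp, hleaf'⟩
  · exact absurd ⟨k, _, hk, n, y, args, rfl⟩ hM
  obtain ⟨rfl, rfl, rfl, rfl⟩ := hk.hnf_unique hk'
  obtain ⟨rfl, rfl, rfl⟩ := spine_pos_inj
    (hleaf.imp And.left fun ⟨_, _, q, hq, _⟩ => ⟨q, hq⟩)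
    (hleaf'.imp And.left fun ⟨_, _, q, hq, _⟩ => ⟨q, hq⟩) hp
  rcases hleaf with ⟨rfl, hl⟩ | ⟨l, hl, q, rfl, rfl, hj, hq⟩ <;>
    rcases hleaf' with ⟨ht, hl'⟩ | ⟨l', hl', q', ht, -, hj', hq'⟩
  · rcases hl with ⟨_, rfl, rfl⟩ | ⟨rfl, _, rfl⟩ | ⟨rfl, rfl, rfl⟩ <;>
      rcases hl' with ⟨_, _, rfl⟩ | ⟨_, _, rfl⟩ | ⟨_, _, rfl⟩ <;> first | rfl | omega
  · simp at ht
  · simp at ht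
  · obtain rfl : l = l' := by omega
    obtain rfl : q = q' := by simpa using ht
    exact ih q.length (by simp [← hlen]; omega) hq hq' rfl

theorem BTNode.exists_of_spine {M : Lam} {k n y : ℕ} {args : List Lam}
    (hk : HeadSteps k M (mkHnf n y args)) {i j : ℕ} (hi : i ≤ n) (hj : j ≤ args.length)
    (hij : j = 0 ∨ i = n) : ∃ o, BTNode M (List.replicate i 0 ++ List.replicate j 1) o := by
  rcases hi.lt_or_eq with hi | rfl
  · obtain rfl : j = 0 := by omega
    exact ⟨.lam, _, by simpa using CBT.lam hk hi⟩
  rcases hj.lt_or_eq with hj | rfl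
  · exact ⟨.app, _, CBT.app hk hj⟩
  · exact ⟨.var y, _, CBT.var hk⟩

theorem BTNode.exists_root (M : Lam) : ∃ o, BTNode M [] o := by
  by_cases h : HasHnf M
  · obtain ⟨k, _, hk, n, y, args, rfl⟩ := h
    simpa using BTNode.exists_of_spine hk (i := 0) (j := 0) (by omega) (by omega) (.inl rfl)
  · exact ⟨.bot, _, CBT.bot h⟩

theorem BTNode.parent {M : Lam} {p r : List ℕ} {c : ℕ} {o : BTN} (h : BTNode M (p ++ c :: r) o) :
    ∃ o₁, BTNode M p o₁ ∧ o₁.HasChild c := by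
  induction hlen : (p ++ c :: r).length using Nat.strong_induction_on generalizing M p r o with
  | _ _ ih
  rcases h.bot_or_spine_or_arg with ⟨-, hp, -⟩ | ⟨k, n, y, args, hk, i, j, t, hp, hleaf⟩
  · simp at hp
  have hbounds : i ≤ n ∧ j ≤ args.length ∧ (j = 0 ∨ i = n) := by
    rcases hleaf with ⟨-, ⟨_, _, _⟩ | ⟨_, _, _⟩ | ⟨_, _, _⟩⟩ | ⟨_, _, _, -, _, _, -⟩ <;> omega
  rcases append_cons_eq_spine_pos hp with ⟨i', hi', rfl, rfl⟩ | ⟨j', hj', rfl, rfl⟩ | ⟨t₁, rfl, rfl⟩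
  · exact ⟨.lam, ⟨_, CBT.lam hk (by omega)⟩, rfl⟩
  · obtain rfl : i = n := by omega
    exact ⟨.app, ⟨_, CBT.app hk (by omega)⟩, .inl rfl⟩
  rcases hleaf with ⟨ht, -⟩ | ⟨l, hl, q, ht, rfl, rfl, hq⟩
  · simp at ht
  rcases t₁ with _ | ⟨x, t₁⟩
  · obtain ⟨rfl, rfl⟩ := List.cons_eq_cons.1 ht
    exact ⟨.app, ⟨_, by simpa using CBT.app hk (j := args.length - 1 - l) (by omega)⟩, .inr rfl⟩
  · obtain ⟨rfl, rfl⟩ := List.cons_eq_cons.1 ht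
    obtain ⟨o₁, ⟨a₁, ho₁⟩, hc⟩ := ih _ (by simp [← hlen]; omega) hq rfl
    exact ⟨o₁, ⟨a₁, by simpa using CBT.child hk hl ho₁⟩, hc⟩

theorem BTNode.exists_child {M : Lam} {p : List ℕ} {o : BTN} {c : ℕ} (h : BTNode M p o)
    (hc : o.HasChild c) : ∃ o', BTNode M (p ++ [c]) o' := by
  induction hlen : p.length using Nat.strong_induction_on generalizing M p o with | _ _ ih
  rcases h.bot_or_spine_or_arg with ⟨-, rfl, rfl⟩ | ⟨k, n, y, args, hk, i, j, t, rfl, hleaf⟩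
  · exact hc.elim
  rcases hleaf with
    ⟨rfl, ⟨hi, rfl, rfl⟩ | ⟨rfl, hj, rfl⟩ | ⟨rfl, rfl, rfl⟩⟩ | ⟨l, hl, q, rfl, rfl, rfl, hq⟩
  · obtain rfl : c = 0 := hc
    simpa [List.replicate_succ'] using
      BTNode.exists_of_spine hk (i := i + 1) (j := 0) (by omega) (by omega) (.inl rfl)
  · rcases hc with rfl | rfl
    · simpa [List.replicate_succ'] using
        BTNode.exists_of_spine hk (i := i) (j := j + 1) le_rfl (by omega) (.inr rfl)
    · obtain ⟨o', a', ho'⟩ := BTNode.exists_root (args.get ⟨args.length - 1 - j, by omega⟩)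
      have hpos := CBT.child hk (by omega : args.length - 1 - j < args.length) ho'
      rw [show args.length - 1 - (args.length - 1 - j) = j by omega] at hpos
      exact ⟨o', a', by simpa using hpos⟩
  · exact hc.elim
  · obtain ⟨o', a', ho'⟩ := ih q.length (by simp [← hlen]; omega) hq hc rfl
    exact ⟨o', a', by simpa using CBT.child hk hl ho'⟩

theorem BTNode.not_lam_of_snoc_one {M : Lam} (p : List ℕ) : ¬ BTNode M (p ++ [1]) .lam := by
  intro h
  induction hlen : p.length using Nat.strong_induction_on generalizing M p with | _ _ ih
  rcases h.bot_or_spine_or_arg with ⟨-, -, h⟩ | ⟨k, n, y, args, hk, i, j, t, hp, hleaf⟩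
  · cases h
  rcases hleaf with ⟨rfl, ⟨_, rfl, -⟩ | ⟨-, -, h⟩ | ⟨-, -, h⟩⟩ | ⟨l, hl, q, rfl, rfl, rfl, hq⟩
  · have h1 : 1 ∈ p ++ [1] := by simp
    rw [hp] at h1
    simp at h1
  · cases h
  · cases h
  rcases q.eq_nil_or_concat' with rfl | ⟨q, x, rfl⟩
  · simpa using congrArg List.getLast? hp
  rw [← List.cons_append, ← List.append_assoc] at hp
  obtain ⟨rfl, hx⟩ := List.append_inj' hp rfl
  obtain rfl : x = 1 := by simpa using hx.symm
  exact ih q.length (by simp [← hlen]; omega) q hq rfl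

def CutTree (M : Lam) : Set (List ℕ) :=
  {p | (∃ o, BTNode M p o) ∧ ∀ q c r, p = q ++ c :: r → ¬ PeriodicAt M q}

theorem nil_mem_cutTree (M : Lam) : [] ∈ CutTree M :=
  ⟨BTNode.exists_root M, by simp⟩

theorem mem_cutTree_of_append_mem {M : Lam} {p q : List ℕ} (h : p ++ q ∈ CutTree M) :
    p ∈ CutTree M := by
  refine ⟨?_, fun q' c r hp => h.2 q' c (r ++ q) (by simp [hp])⟩
  rcases q with _ | ⟨c, r⟩
  · simpa using h.1
  · obtain ⟨o, ho⟩ := h.1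
    exact ho.parent.imp fun _ h => h.1

theorem setOf_append_singleton_mem_cutTree_finite (M : Lam) (p : List ℕ) :
    {c | p ++ [c] ∈ CutTree M}.Finite := by
  refine (Set.finite_Iic 2).subset fun c hc => ?_
  obtain ⟨o, ho⟩ := hc.1
  obtain ⟨o₁, -, hc⟩ := ho.parent (r := [])
  rcases o₁ <;> simp only [BTN.HasChild] at hc <;> simp <;> omega

theorem append_mem_cutTree {M : Lam} {p : List ℕ} {o : BTN} {c : ℕ} (hp : p ∈ CutTree M)
    (hper : ¬ PeriodicAt M p) (ho : BTNode M p o) (hc : o.HasChild c) : p ++ [c] ∈ CutTree M := by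
  refine ⟨ho.exists_child hc, fun q c' r h => ?_⟩
  rcases r.eq_nil_or_concat' with rfl | ⟨r, x, rfl⟩
  · rwa [← (List.append_inj' h rfl).1]
  · rw [← List.cons_append, ← List.append_assoc] at h
    exact hp.2 q c' r (List.append_inj' h rfl).1

theorem LocallyPeriodic.exists_bound {M : Lam} (hM : LocallyPeriodic M) :
    ∃ D, ∀ p ∈ CutTree M, p.length ≤ D := by
  by_contra! h
  obtain ⟨π, hπ⟩ := exists_seq_forall_ofFn_mem_of_unbounded (fun _ _ => mem_cutTree_of_append_mem)
    (setOf_append_singleton_mem_cutTree_finite M) fun n => (h n).imp fun _ h => ⟨h.1, h.2.le⟩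
  obtain ⟨n, hn⟩ := hM π fun n => (hπ n).1
  exact (hπ (n + 1)).2 _ (π n) [] (by rw [List.ofFn_succ_last]; rfl) hn

def LamB.depth : LamB → ℕ
  | .abs t => t.depth + 1
  | .app s t => max s.depth t.depth + 1
  | _ => 0

theorem LamB.nodeAt_eq_none_of_depth_lt {C : LamB} {p : List ℕ} (h : C.depth < p.length) :
    C.nodeAt p = none := by
  induction C generalizing p <;> rcases p with _ | ⟨_ | _ | _ | c, p⟩ <;>
    simp_all [LamB.depth, LamB.nodeAt]

theorem LamB.nodeAt_nil (C : LamB) : C.nodeAt [] = some C.head := by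
  cases C <;> rfl

theorem LamB.redexFree_of_forall_nodeAt_ne_lam {C : LamB}
    (h : ∀ p, C.nodeAt (p ++ [1]) ≠ some .lam) : C.RedexFree := by
  induction C with
  | abs t ih => exact ih fun p => h (0 :: p)
  | app s t ihs iht =>
    have hs := ihs fun p => h (1 :: p)
    have ht := iht fun p => h (2 :: p)
    cases s with
    | abs => exact h [] rfl
    | _ => exact ⟨hs, ht⟩
  | _ => trivial

open Classical in
noncomputable def nodeOf (M : Lam) (p : List ℕ) : BTN :=
  if h : ∃ o, BTNode M p o then h.choose else .bot

theorem nodeOf_spec {M : Lam} {p : List ℕ} (h : ∃ o, BTNode M p o) : BTNode M p (nodeOf M p) := by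
  rw [nodeOf, dif_pos h]
  exact h.choose_spec

theorem BTNode.nodeOf_eq {M : Lam} {p : List ℕ} {o : BTN} (h : BTNode M p o) : nodeOf M p = o :=
  (nodeOf_spec ⟨o, h⟩).unique h

theorem BTN.toCN_injective : Function.Injective BTN.toCN := by
  intro o o' h
  cases o <;> cases o' <;> simp_all [BTN.toCN]

theorem BTN.toCN_ne_hole (o : BTN) (i : ℕ) : o.toCN ≠ .hole i := by
  cases o <;> simp [BTN.toCN]

open Classical in
noncomputable def cutLabel (M : Lam) (p : List ℕ) : CN :=
  if PeriodicAt M p then .hole (Encodable.encode p) else (nodeOf M p).toCN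

theorem cutLabel_eq_hole {M : Lam} {p : List ℕ} {i : ℕ} (h : cutLabel M p = .hole i) :
    PeriodicAt M p ∧ i = Encodable.encode p := by
  unfold cutLabel at h
  split_ifs at h with hper
  · exact ⟨hper, (CN.hole.inj h).symm⟩
  · exact absurd h (BTN.toCN_ne_hole _ _)

theorem cutLabel_eq_toCN {M : Lam} {p : List ℕ} {o : BTN} (h : cutLabel M p = o.toCN) :
    ¬ PeriodicAt M p ∧ nodeOf M p = o := by
  unfold cutLabel at h
  split_ifs at h with hper
  · cases o <;> cases h
  · exact ⟨hper, BTN.toCN_injective h⟩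

open Classical in
/-- The fuel only ensures termination: it is never exhausted once it exceeds the depth of
`CutTree M`. -/
noncomputable def cutContext (M : Lam) : ℕ → List ℕ → LamB
  | 0, _ => .bot
  | f + 1, p =>
    if PeriodicAt M p then .hole (Encodable.encode p) else
      match nodeOf M p with
      | .bot => .bot
      | .var y => .var y
      | .lam => .abs (cutContext M f (p ++ [0]))
      | .app => .app (cutContext M f (p ++ [1])) (cutContext M f (p ++ [2]))

theorem cutContext_head (M : Lam) (f : ℕ) (p : List ℕ) :
    (cutContext M (f + 1) p).head = cutLabel M p := by
  rw [cutContext, cutLabel]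
  split_ifs
  · rfl
  · cases nodeOf M p <;> rfl

open Classical in
theorem nodeAt_cutContext_cons (M : Lam) (f : ℕ) (p : List ℕ) (c : ℕ) (q : List ℕ) :
    (cutContext M (f + 1) p).nodeAt (c :: q) =
      if ¬ PeriodicAt M p ∧ (nodeOf M p).HasChild c then (cutContext M f (p ++ [c])).nodeAt q
      else none := by
  rw [cutContext]
  by_cases hper : PeriodicAt M p
  · simp [hper, LamB.nodeAt]
  · cases nodeOf M p <;> rcases c with _ | _ | _ | c <;> simp [hper, LamB.nodeAt, BTN.HasChild]

theorem nodeAt_cutContext_eq_some_iff {M : Lam} {D : ℕ} (hD : ∀ p ∈ CutTree M, p.length ≤ D)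
    (q : List ℕ) {f : ℕ} {p : List ℕ} (hp : p ∈ CutTree M) (hf : D < f + p.length) (c : CN) :
    (cutContext M f p).nodeAt q = some c ↔ p ++ q ∈ CutTree M ∧ cutLabel M (p ++ q) = c := by
  obtain ⟨f, rfl⟩ := Nat.exists_eq_succ_of_ne_zero (n := f) (by have := hD p hp; omega)
  induction q generalizing f p with
  | nil => simp [LamB.nodeAt_nil, cutContext_head, hp]
  | cons c' q ih =>
    rw [nodeAt_cutContext_cons]
    split_ifs with h
    · have hp' := append_mem_cutTree hp h.1 (nodeOf_spec hp.1) h.2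
      obtain ⟨f, rfl⟩ := Nat.exists_eq_succ_of_ne_zero (n := f) <| by
        have := hD _ hp'
        simp at this
        omega
      simpa using ih (f := f) hp' (by simp only [List.length_append, List.length_singleton]; omega)
    · simp only [false_iff, not_and]
      intro hmem
      obtain ⟨o, ho, hc⟩ := hmem.1.choose_spec.parent
      exact absurd ⟨hmem.2 p c' q rfl, ho.nodeOf_eq ▸ hc⟩ h

theorem BTNode.mem_cutTree_or_periodic_prefix {M : Lam} {p : List ℕ} {o : BTN} (h : BTNode M p o) :
    p ∈ CutTree M ∨ ∃ q c r, p = q ++ c :: r ∧ q ∈ CutTree M ∧ PeriodicAt M q := by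
  induction p using List.reverseRecOn generalizing o with
  | nil => exact .inl (nil_mem_cutTree M)
  | append_singleton p c ih =>
    obtain ⟨o₁, ho₁, hc⟩ := h.parent (r := [])
    rcases ih ho₁ with hp | ⟨q, c', r, rfl, hq, hper⟩
    · by_cases hper : PeriodicAt M p
      · exact .inr ⟨p, c, [], rfl, hp, hper⟩
      · exact .inl (append_mem_cutTree hp hper ho₁ hc)
    · exact .inr ⟨q, c', r ++ [c], by simp, hq, hper⟩

noncomputable def holeTerm (M : Lam) (p : List ℕ) : Lam :=
  open Classical in if h : ∃ R, TermAt M p R ∧ Conv M R then h.choose else M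

theorem PeriodicAt.holeTerm_spec {M : Lam} {p : List ℕ} (h : PeriodicAt M p) :
    TermAt M p (holeTerm M p) ∧ Conv M (holeTerm M p) := by
  rw [holeTerm, dif_pos h.2.2]
  exact h.2.2.choose_spec

theorem globallyPeriodic_of_nodeAt_iff {M : Lam} {C : LamB}
    (hC : ∀ q c, C.nodeAt q = some c ↔ q ∈ CutTree M ∧ cutLabel M q = c) : GloballyPeriodic M := by
  have not_periodic_nil : ¬ PeriodicAt M [] := fun h => h.1 rfl
  refine ⟨C, fun i => holeTerm M (Denumerable.ofNat (List ℕ) i), ?_, ?_, ?_, ?_, ?_⟩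
  · refine LamB.redexFree_of_forall_nodeAt_ne_lam fun p h => ?_
    obtain ⟨hp, hlab⟩ := (hC _ _).1 h
    obtain ⟨-, hnode⟩ := cutLabel_eq_toCN (o := .lam) hlab
    exact BTNode.not_lam_of_snoc_one p (hnode ▸ nodeOf_spec hp.1)
  · rintro i rfl
    have := (hC [] _).2 ⟨nil_mem_cutTree M, rfl⟩
    simp [LamB.nodeAt, LamB.head, cutLabel, not_periodic_nil] at this
    exact BTN.toCN_ne_hole _ _ this.symm
  · intro p o h
    obtain ⟨hp, hlab⟩ := (hC _ _).1 h
    exact (cutLabel_eq_toCN hlab).2 ▸ nodeOf_spec hp.1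
  · intro p o h
    rcases h.mem_cutTree_or_periodic_prefix with hp | ⟨q, c, r, rfl, hq, hper⟩
    · by_cases hper : PeriodicAt M p
      · exact .inr ⟨p, [], Encodable.encode p, by simp, (hC _ _).2 ⟨hp, by simp [cutLabel, hper]⟩⟩
      · exact .inl ((hC _ _).2 ⟨hp, by simp [cutLabel, hper, h.nodeOf_eq]⟩)
    · exact .inr ⟨q, c :: r, Encodable.encode q, rfl, (hC _ _).2 ⟨hq, by simp [cutLabel, hper]⟩⟩
  · intro p i h
    obtain ⟨-, hlab⟩ := (hC _ _).1 h
    obtain ⟨hper, rfl⟩ := cutLabel_eq_hole hlab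
    simpa using hper.holeTerm_spec

theorem LocallyPeriodic.globallyPeriodic {M : Lam} (hM : LocallyPeriodic M) :
    GloballyPeriodic M := by
  obtain ⟨D, hD⟩ := hM.exists_bound
  exact globallyPeriodic_of_nodeAt_iff fun q c => by
    simpa using nodeAt_cutContext_eq_some_iff hD q (nil_mem_cutTree M) (f := D + 1) (by simp) c

theorem LamB.eq_hole_of_nodeAt_nil {C : LamB} {i : ℕ} (h : C.nodeAt [] = some (.hole i)) :
    C = .hole i := by
  cases C <;> simp_all [LamB.nodeAt, LamB.head]

theorem GloballyPeriodic.locallyPeriodic {M : Lam} (hG : GloballyPeriodic M) :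
    LocallyPeriodic M := by
  obtain ⟨C, Ms, -, hC, -, hcomplete, hholes⟩ := hG
  intro π hπ
  obtain ⟨o, ho⟩ := hπ (C.depth + 1)
  rcases hcomplete _ o ho with h | ⟨q, r, i, hqr, hq⟩
  · rw [LamB.nodeAt_eq_none_of_depth_lt (by simp)] at h
    cases h
  have hq_eq := List.eq_ofFn_of_append_eq_ofFn hqr.symm
  refine ⟨q.length, ?_⟩
  rw [← hq_eq]
  refine ⟨?_, ?_, Ms i, hholes q i hq⟩
  · rintro rfl
    exact hC i (LamB.eq_hole_of_nodeAt_nil hq)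
  · rw [hq_eq]
    exact hπ q.length

/-- a λ-term is locally periodic iff it is globally periodic. -/
theorem locally_periodic_iff_globally_periodic (M : Lam) :
    LocallyPeriodic M ↔ GloballyPeriodic M :=
  ⟨LocallyPeriodic.globallyPeriodic, GloballyPeriodic.locallyPeriodic⟩

end Lam
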